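/- arXiv:2011.03827 — 5 statements merged into one kernel-verified Lean document; each statement's English description precedes it below -/
import Mathlib

section
/- For every real number u ≥ 1, |log((1 + sqrt(1 - u^{-2}))/2)| ≤ 1/u^2. -/
theorem log_half_one_add_sqrt_bound (u : ℝ) (hu : 1 ≤ u) :
    |Real.log ((1 + Real.sqrt (1 - 1 / u ^ 2)) / 2)| ≤ 1 / u ^ 2 := by
  have hu0 : (0:ℝ) < u := lt_of_lt_of_le one_pos hu
  have ht : 0 < 1 / u ^ 2 := by positivity
  have ht1 : 1 / u ^ 2 ≤ 1 := by
    rw [div_le_one (by positivity)]; nlinarith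
  set s : ℝ := 1 - 1 / u ^ 2 with hs
  clear_value s
  have hs0 : 0 ≤ s := by linarith
  have hs1 : s ≤ 1 := by linarith
  have hsq := Real.sq_sqrt hs0
  have hsqnn := Real.sqrt_nonneg s
  have hsqle1 : Real.sqrt s ≤ 1 := by nlinarith
  have hsge : s ≤ Real.sqrt s := by nlinarith
  set x : ℝ := (1 + Real.sqrt s) / 2 with hx
  clear_value x
  have hxhalf : 1 / 2 ≤ x := by rw [hx]; linarith
  have hx1 : x ≤ 1 := by rw [hx]; linarith
  have hx0 : 0 < x := by linarith
  have hlogle : Real.log x ≤ 0 := Real.log_nonpos (by linarith) hx1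
  rw [abs_of_nonpos hlogle]
  have h2 := Real.log_le_sub_one_of_pos (show (0:ℝ) < x⁻¹ by positivity)
  rw [Real.log_inv] at h2
  have hinv : x⁻¹ - 1 ≤ 1 / u ^ 2 := by
    have : x⁻¹ ≤ 2 * (1 - x) + 1 := by
      rw [inv_le_iff_one_le_mul₀ hx0]
      nlinarith
    nlinarith
  linarith
end

section
/- Let k > 0, R ≥ 0, d ≥ 0 be real numbers and φ ∈ [-1,1], with c = cosh(kd), s = sinh(kd), α = cosh(kR), β = sinh(kR). Define R' = (1/k)·arccosh(α·c + φ·β·s). Then |R' - R - (1/k)·log(c + φ·s)| ≤ (5/k)·exp(2k(d - R)). -/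
/-- The inverse hyperbolic cosine on `[1, ∞)`. -/
noncomputable def arcosh (x : ℝ) : ℝ := Real.log (x + Real.sqrt (x ^ 2 - 1))

lemma arcosh_log_bounds (u v : ℝ) (hu0 : 0 < u) (hv0 : 0 < v) (huv : 1 ≤ u * v) :
    Real.log u ≤ arcosh ((u + v) / 2) ∧
      arcosh ((u + v) / 2) ≤ Real.log u + v / u := by
  set x := (u + v) / 2 with hx
  have hx1 : 1 ≤ x := by rw [hx]; nlinarith [sq_nonneg (u - v)]
  have hx2 : 0 ≤ x ^ 2 - 1 := by nlinarith
  set s := Real.sqrt (x ^ 2 - 1) with hs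
  have hs0 : 0 ≤ s := Real.sqrt_nonneg _
  have hssq : s ^ 2 = x ^ 2 - 1 := Real.sq_sqrt hx2
  have hslb : (u - v) / 2 ≤ s := by
    rcases le_or_gt ((u - v) / 2) 0 with h | h
    · linarith
    · nlinarith
  set y := x + s with hy
  have hyu : u ≤ y := by rw [hy, hx]; linarith
  have hy0 : 0 < y := lt_of_lt_of_le hu0 hyu
  have hy1 : y * (u + v - y) = 1 := by
    rw [hy, hx]; linear_combination -hssq
  have hyuv : y ≤ u + v := by nlinarith
  have harc : arcosh x = Real.log y := by rw [arcosh, hy, hs]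
  constructor
  · rw [harc]
    exact Real.log_le_log hu0 hyu
  · rw [harc]
    have hle := Real.log_le_sub_one_of_pos (div_pos hy0 hu0)
    rw [Real.log_div hy0.ne' hu0.ne'] at hle
    have h3 : y / u - 1 ≤ v / u := by
      rw [div_sub_one hu0.ne']
      gcongr
      linarith
    linarith

set_option maxHeartbeats 800000 in
theorem radial_increment_approx (k R d φ : ℝ) (hk : 0 < k) (hR : 0 ≤ R) (hd : 0 ≤ d)
    (hφ : φ ∈ Set.Icc (-1 : ℝ) 1) :
    |(1 / k) * arcosh (Real.cosh (k * R) * Real.cosh (k * d) +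
        φ * Real.sinh (k * R) * Real.sinh (k * d)) - R -
      (1 / k) * Real.log (Real.cosh (k * d) + φ * Real.sinh (k * d))| ≤
      (5 / k) * Real.exp (2 * k * (d - R)) := by
  obtain ⟨hφ1, hφ2⟩ := hφ
  set a := k * R with ha
  set b := k * d with hb
  have ha0 : 0 ≤ a := mul_nonneg hk.le hR
  have hb0 : 0 ≤ b := mul_nonneg hk.le hd
  set L := Real.cosh b + φ * Real.sinh b with hL
  set M := Real.cosh b - φ * Real.sinh b with hM
  have hsb : 0 ≤ Real.sinh b := Real.sinh_nonneg_iff.2 hb0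
  have hcsb := Real.cosh_sub_sinh b
  have hcas := Real.cosh_add_sinh b
  have hps : -Real.sinh b ≤ φ * Real.sinh b := by
    have := mul_le_mul_of_nonneg_right hφ1 hsb
    linarith
  have hms : φ * Real.sinh b ≤ Real.sinh b := by
    have := mul_le_mul_of_nonneg_right hφ2 hsb
    linarith
  have hLlb : Real.exp (-b) ≤ L := by rw [hL]; linarith
  have hL0 : 0 < L := lt_of_lt_of_le (Real.exp_pos _) hLlb
  have hM0 : 0 < M := by
    have : Real.exp (-b) ≤ M := by rw [hM]; linarith
    exact lt_of_lt_of_le (Real.exp_pos _) this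
  have hMle : M ≤ Real.exp b := by rw [hM]; linarith
  have hLM : 1 ≤ L * M := by
    have h1 := Real.cosh_sq_sub_sinh_sq b
    have h2 : L * M = 1 + (1 - φ ^ 2) * Real.sinh b ^ 2 := by
      rw [hL, hM]; linear_combination h1
    have h3 : 0 ≤ (1 - φ ^ 2) * Real.sinh b ^ 2 := by
      apply mul_nonneg ?_ (sq_nonneg _)
      nlinarith
    linarith
  set u := Real.exp a * L with hu
  set v := Real.exp (-a) * M with hv
  have hu0 : 0 < u := mul_pos (Real.exp_pos _) hL0
  have hv0 : 0 < v := mul_pos (Real.exp_pos _) hM0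
  have hexpaa : Real.exp a * Real.exp (-a) = 1 := by
    rw [← Real.exp_add]; simp
  have huv : 1 ≤ u * v := by
    have h : u * v = L * M := by
      rw [hu, hv, mul_mul_mul_comm, hexpaa, one_mul]
    rw [h]; exact hLM
  have hxeq : Real.cosh a * Real.cosh b + φ * Real.sinh a * Real.sinh b
      = (u + v) / 2 := by
    rw [hu, hv, hL, hM, Real.cosh_eq, Real.sinh_eq, Real.cosh_eq, Real.sinh_eq]
    ring
  obtain ⟨hlow, hhigh⟩ := arcosh_log_bounds u v hu0 hv0 huv
  rw [hxeq]
  set ε := Real.exp (2 * k * (d - R)) with hε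
  have hε0 : 0 < ε := Real.exp_pos _
  have h4 : v / u ≤ ε := by
    have hve : v ≤ Real.exp (b - a) := by
      rw [hv]
      calc Real.exp (-a) * M ≤ Real.exp (-a) * Real.exp b :=
            mul_le_mul_of_nonneg_left hMle (Real.exp_pos _).le
        _ = Real.exp (b - a) := by rw [← Real.exp_add]; ring_nf
    have hεu : Real.exp (b - a) ≤ ε * u := by
      have hεeq : ε = Real.exp (2 * (b - a)) := by
        rw [hε, ha, hb]; ring_nf
      calc Real.exp (b - a)
          = Real.exp (2 * (b - a)) * Real.exp a * Real.exp (-b) := by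
            rw [← Real.exp_add, ← Real.exp_add]; ring_nf
        _ ≤ Real.exp (2 * (b - a)) * Real.exp a * L := by
            apply mul_le_mul_of_nonneg_left hLlb (by positivity)
        _ = ε * u := by rw [hεeq, hu]; ring
    rw [div_le_iff₀ hu0]
    linarith
  have hlogu : Real.log u = a + Real.log L := by
    rw [hu, Real.log_mul (Real.exp_ne_zero _) hL0.ne', Real.log_exp]
  have hkne : k ≠ 0 := hk.ne'
  have hexp : (1 / k) * arcosh ((u + v) / 2) - R - (1 / k) * Real.log L
      = (1 / k) * (arcosh ((u + v) / 2) - Real.log u) := by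
    rw [hlogu, ha]; field_simp; ring
  rw [hexp, abs_of_nonneg (mul_nonneg (by positivity) (by linarith))]
  have hD : arcosh ((u + v) / 2) - Real.log u ≤ 5 * ε := by linarith
  calc (1 / k) * (arcosh ((u + v) / 2) - Real.log u) ≤ (1 / k) * (5 * ε) :=
        mul_le_mul_of_nonneg_left hD (by positivity)
    _ = (5 / k) * ε := by ring
end

section
/- Fix k > 0 and d > 0. Define G(φ) = ((1/k)·log(cosh(kd) + φ·sinh(kd)) - φ·d)·(1 - φ²)^{-1} for φ ∈ (-1, 1). Then G is (weakly) decreasing on (-1, 1). -/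
open Real Set

/-
With a = k d and E = cosh a + φ sinh a, one computes
k (1 - φ²)² G'(φ) = N(φ, a) := (1 - φ²)(sinh a / E - a) + 2φ(log E - φ a).
Viewed as a function of a for fixed φ, N vanishes at a = 0 and has derivative
-(1 - φ²)² sinh² a / E² ≤ 0, so N ≤ 0 for a ≥ 0 and hence G' ≤ 0.
-/

lemma cosh_add_mul_sinh_pos {φ : ℝ} (h₁ : -1 < φ) (h₂ : φ < 1) (a : ℝ) :
    0 < cosh a + φ * sinh a := by
  have : cosh a + φ * sinh a = ((1 + φ) * exp a + (1 - φ) * exp (-a)) / 2 := by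
    rw [cosh_eq, sinh_eq]; ring
  rw [this]
  have : 0 < 1 + φ := by linarith
  have : 0 < 1 - φ := by linarith
  positivity

noncomputable def derivNumerator (φ a : ℝ) : ℝ :=
  (1 - φ ^ 2) * (sinh a / (cosh a + φ * sinh a) - a) +
    2 * φ * (log (cosh a + φ * sinh a) - φ * a)

lemma hasDerivAt_derivNumerator {φ : ℝ} (h₁ : -1 < φ) (h₂ : φ < 1) (a : ℝ) :
    HasDerivAt (derivNumerator φ)
      (-((1 - φ ^ 2) ^ 2 * sinh a ^ 2 / (cosh a + φ * sinh a) ^ 2)) a := by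
  have hE := (cosh_add_mul_sinh_pos h₁ h₂ a).ne'
  have hE' : HasDerivAt (fun a => cosh a + φ * sinh a) (sinh a + φ * cosh a) a :=
    (hasDerivAt_cosh a).add ((hasDerivAt_sinh a).const_mul φ)
  have h := (((hasDerivAt_sinh a).div hE' hE).sub (hasDerivAt_id a)).const_mul (1 - φ ^ 2)
    |>.add ((((hasDerivAt_log hE).comp a hE').sub ((hasDerivAt_id a).const_mul φ)).const_mul
      (2 * φ))
  refine h.congr_deriv ?_
  field_simp
  ring

lemma derivNumerator_nonpos {φ a : ℝ} (h₁ : -1 < φ) (h₂ : φ < 1) (ha : 0 ≤ a) :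
    derivNumerator φ a ≤ 0 := by
  have hanti : Antitone (derivNumerator φ) :=
    antitone_of_hasDerivAt_nonpos (hasDerivAt_derivNumerator h₁ h₂) fun a =>
      neg_nonpos.2 (by positivity)
  simpa [derivNumerator] using hanti ha

lemma hasDerivAt_G {k : ℝ} (hk : k ≠ 0) (d : ℝ) {φ : ℝ} (h₁ : -1 < φ) (h₂ : φ < 1) :
    HasDerivAt
      (fun φ : ℝ =>
        ((1 / k) * log (cosh (k * d) + φ * sinh (k * d)) - φ * d) * (1 - φ ^ 2)⁻¹)
      (derivNumerator φ (k * d) / (k * (1 - φ ^ 2) ^ 2)) φ := by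
  have hE := (cosh_add_mul_sinh_pos h₁ h₂ (k * d)).ne'
  have hQ : 1 - φ ^ 2 ≠ 0 := by nlinarith
  have hE' : HasDerivAt (fun φ => cosh (k * d) + φ * sinh (k * d)) (sinh (k * d)) φ := by
    simpa using ((hasDerivAt_id φ).mul_const (sinh (k * d))).const_add (cosh (k * d))
  have hQ' : HasDerivAt (fun φ : ℝ => 1 - φ ^ 2) (-(2 * φ)) φ := by
    simpa using (hasDerivAt_pow 2 φ).const_sub 1
  have h := ((((hasDerivAt_log hE).comp φ hE').const_mul (1 / k)).sub
    ((hasDerivAt_id φ).mul_const d)).mul (hQ'.inv hQ)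
  refine h.congr_deriv ?_
  simp only [derivNumerator, Pi.sub_apply, Pi.inv_apply, Function.comp_apply, id]
  field_simp

theorem G_antitone (k d : ℝ) (hk : 0 < k) (hd : 0 < d) :
    AntitoneOn
      (fun φ : ℝ =>
        ((1 / k) * Real.log (Real.cosh (k * d) + φ * Real.sinh (k * d)) - φ * d) *
          (1 - φ ^ 2)⁻¹)
      (Set.Ioo (-1 : ℝ) 1) := by
  have hG (φ : ℝ) (hφ : φ ∈ Ioo (-1 : ℝ) 1) := hasDerivAt_G hk.ne' d hφ.1 hφ.2
  refine antitoneOn_of_hasDerivWithinAt_nonpos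
    (f' := fun φ => derivNumerator φ (k * d) / (k * (1 - φ ^ 2) ^ 2)) (convex_Ioo _ _)
    (fun φ hφ => (hG φ hφ).continuousAt.continuousWithinAt) ?_ ?_ <;> rw [interior_Ioo]
  · exact fun φ hφ => (hG φ hφ).hasDerivWithinAt
  · rintro φ ⟨h₁, h₂⟩
    have : 0 < 1 - φ ^ 2 := by nlinarith
    exact div_nonpos_of_nonpos_of_nonneg
      (derivNumerator_nonpos h₁ h₂ (mul_pos hk hd).le) (by positivity)
end

section
/- Fix d > 0. The function k ↦ J_min(k, d) := (1/(2d²))·(d - sinh(kd)/(k·(cosh(kd) + sinh(kd)))) is positive and increasing in k on (0, ∞); for fixed k > 0, the function d ↦ J_min(k, d) is decreasing in d on (0, ∞). -/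
/-!
Put x = 2kd. Since cosh + sinh = exp, the quantity equals k·φ(x) = (1 - g(x))/(2d) with
φ(x) = (x - 1 + e^{-x})/x² and g(x) = (1 - e^{-x})/x. Positivity is e^{-x} > 1 - x.
g is minus the slope of the convex function e^{-x} from 0, hence antitone, so J_min increases
in k. The derivative of φ has numerator (2 - x) - (2 + x)e^{-x} ≤ 0, so φ is antitone and
J_min decreases in d.
-/

open Real Set

theorem AntitoneOn.comp_const_mul_Ioi {α β : Type*} [Semiring α] [PartialOrder α]
    [IsStrictOrderedRing α] [Preorder β] {f : α → β} (hf : AntitoneOn f (Ioi 0)) {c : α}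
    (hc : 0 < c) : AntitoneOn (fun x ↦ f (c * x)) (Ioi 0) :=
  hf.comp_MonotoneOn ((monotone_mul_left_of_nonneg hc.le).monotoneOn _) fun _ hx ↦ mul_pos hc hx

theorem add_one_mul_exp_neg_le_one (x : ℝ) : (x + 1) * exp (-x) ≤ 1 := by
  calc (x + 1) * exp (-x) ≤ exp x * exp (-x) := by gcongr; exact add_one_le_exp x
    _ = 1 := by rw [← exp_add, add_neg_cancel, exp_zero]

theorem two_sub_le_two_add_mul_exp_neg {x : ℝ} (hx : 0 ≤ x) : 2 - x ≤ (2 + x) * exp (-x) := by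
  have hmono : MonotoneOn (fun x ↦ (2 + x) * exp (-x) - (2 - x)) (Ici 0) := by
    refine monotoneOn_of_hasDerivWithinAt_nonneg (convex_Ici 0) (by fun_prop)
      (fun y _ ↦ ?_) (fun y _ ↦ ?_) (f' := fun y ↦ 1 - (y + 1) * exp (-y))
    · have : HasDerivAt (fun x ↦ (2 + x) * exp (-x) - (2 - x)) (1 - (y + 1) * exp (-y)) y :=
        ((((hasDerivAt_id' y).const_add 2).mul (hasDerivAt_neg' y).exp).sub
          ((hasDerivAt_id' y).const_sub 2)).congr_deriv (by ring)
      exact this.hasDerivWithinAt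
    · linarith [add_one_mul_exp_neg_le_one y]
  simpa using hmono self_mem_Ici hx hx

theorem antitoneOn_one_sub_exp_neg_div : AntitoneOn (fun x ↦ (1 - exp (-x)) / x) (Ioi 0) := by
  intro x hx y hy hxy
  have hconv : ConvexOn ℝ univ (fun x ↦ exp (-x)) :=
    convexOn_exp.comp_linearMap (-LinearMap.id)
  have := hconv.secant_mono (mem_univ 0) (mem_univ x) (mem_univ y) hx.ne' hy.ne' hxy
  simp only [neg_zero, exp_zero, sub_zero] at this
  have hneg (t : ℝ) : (1 - exp (-t)) / t = -((exp (-t) - 1) / t) := by ring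
  simp only [hneg]
  linarith

theorem sub_one_add_exp_neg_div_sq_pos {x : ℝ} (hx : 0 < x) : 0 < (x - 1 + exp (-x)) / x ^ 2 := by
  have := add_one_lt_exp (neg_ne_zero.mpr hx.ne')
  exact div_pos (by linarith) (by positivity)

theorem antitoneOn_sub_one_add_exp_neg_div_sq :
    AntitoneOn (fun x ↦ (x - 1 + exp (-x)) / x ^ 2) (Ioi 0) := by
  have hderiv (x : ℝ) (hx : x ∈ Ioi 0) : HasDerivAt (fun x ↦ (x - 1 + exp (-x)) / x ^ 2)
      ((2 - x - (2 + x) * exp (-x)) / x ^ 3) x := by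
    have hnum : HasDerivAt (fun x ↦ x - 1 + exp (-x)) (1 - exp (-x)) x :=
      (((hasDerivAt_id' x).sub_const 1).add (hasDerivAt_neg' x).exp).congr_deriv (by ring)
    have hx0 : x ≠ 0 := ne_of_gt hx
    exact (hnum.div (hasDerivAt_pow 2 x) (pow_ne_zero 2 hx0)).congr_deriv (by field_simp; ring)
  refine antitoneOn_of_hasDerivWithinAt_nonpos (convex_Ioi 0) (HasDerivAt.continuousOn hderiv)
    (fun x hx ↦ ?_) (fun x hx ↦ ?_) (f' := fun x ↦ (2 - x - (2 + x) * exp (-x)) / x ^ 3)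
  all_goals rw [interior_Ioi] at hx
  · exact (hderiv x hx).hasDerivWithinAt
  · exact div_nonpos_of_nonpos_of_nonneg (by linarith [two_sub_le_two_add_mul_exp_neg hx.le])
      (pow_nonneg hx.le 3)

theorem sinh_div_cosh_add_sinh (x : ℝ) :
    sinh x / (cosh x + sinh x) = (1 - exp (-(2 * x))) / 2 := by
  rw [cosh_add_sinh, sinh_eq, show 2 * x = x + x by ring, neg_add, exp_add, exp_neg]
  field_simp

noncomputable def jmin (k d : ℝ) : ℝ :=
  (1 / (2 * d ^ 2)) * (d - sinh (k * d) / (k * (cosh (k * d) + sinh (k * d))))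

theorem jmin_eq_mul {k : ℝ} (hk : k ≠ 0) (d : ℝ) :
    jmin k d = k * ((2 * k * d - 1 + exp (-(2 * k * d))) / (2 * k * d) ^ 2) := by
  rw [jmin, div_mul_eq_div_div_swap (sinh _), sinh_div_cosh_add_sinh]
  field_simp
  ring_nf

theorem jmin_eq_div {k d : ℝ} (hk : k ≠ 0) (hd : d ≠ 0) :
    jmin k d = (1 - (1 - exp (-(2 * d * k))) / (2 * d * k)) / (2 * d) := by
  rw [jmin, div_mul_eq_div_div_swap (sinh _), sinh_div_cosh_add_sinh]
  field_simp

theorem Jmin_properties :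
    (∀ d : ℝ, 0 < d → ∀ k : ℝ, 0 < k →
      0 < (1 / (2 * d ^ 2)) *
        (d - Real.sinh (k * d) / (k * (Real.cosh (k * d) + Real.sinh (k * d))))) ∧
    (∀ d : ℝ, 0 < d →
      MonotoneOn (fun k : ℝ => (1 / (2 * d ^ 2)) *
        (d - Real.sinh (k * d) / (k * (Real.cosh (k * d) + Real.sinh (k * d)))))
        (Set.Ioi 0)) ∧
    (∀ k : ℝ, 0 < k →
      AntitoneOn (fun d : ℝ => (1 / (2 * d ^ 2)) *
        (d - Real.sinh (k * d) / (k * (Real.cosh (k * d) + Real.sinh (k * d)))))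
        (Set.Ioi 0)) := by
  refine ⟨fun d hd k hk ↦ ?_, fun d hd ↦ ?_, fun k hk ↦ ?_⟩
  · change 0 < jmin k d
    rw [jmin_eq_mul hk.ne']
    exact mul_pos hk (sub_one_add_exp_neg_div_sq_pos (by positivity))
  · change MonotoneOn (fun k ↦ jmin k d) (Ioi 0)
    refine MonotoneOn.congr (fun a ha b hb hab ↦ ?_) fun k hk ↦
      (jmin_eq_div (ne_of_gt hk) hd.ne').symm
    have := antitoneOn_one_sub_exp_neg_div.comp_const_mul_Ioi (by positivity : (0 : ℝ) < 2 * d)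
      ha hb hab
    dsimp only at this ⊢
    gcongr
  · change AntitoneOn (fun d ↦ jmin k d) (Ioi 0)
    refine AntitoneOn.congr (fun a ha b hb hab ↦ ?_) fun d _ ↦ (jmin_eq_mul hk.ne' d).symm
    exact mul_le_mul_of_nonneg_left (antitoneOn_sub_one_add_exp_neg_div_sq.comp_const_mul_Ioi
      (by positivity) ha hb hab) hk.le
end

section
/- Let k > 0, d > 0 and let φ be a random variable with values in [-1,1] such that P(φ = 1) = α and P(φ = -1 + ε) = 1 - α, where ε = (1 - cosh(d) + sinh(d))/sinh(d) and α = (1 - ε)/(2 - ε). Then E[φ] = 0, and E[log(cosh(d) + φ·sinh(d))] = α·d. -/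
open MeasureTheory Real

/-!
The choice of `ε` makes the lower atom `-1 + ε` the point where `cosh d + x sinh d = 1`, and the
choice of `α` makes the two-point law centred; the log-expectation then only sees the atom `1`,
where `cosh d + sinh d = exp d`.
-/

section TwoPointLaw

variable {Ω X : Type*} [MeasurableSpace Ω] [MeasurableSpace X] [MeasurableSingletonClass X]
  {μ : Measure Ω} {φ : Ω → X} {a b : X}

theorem ae_eq_or_eq_of_measure_add_eq_one [IsProbabilityMeasure μ] (hφ : Measurable φ)
    (hab : a ≠ b) (h : μ {ω | φ ω = a} + μ {ω | φ ω = b} = 1) :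
    ∀ᵐ ω ∂μ, φ ω = a ∨ φ ω = b := by
  have hB : MeasurableSet {ω | φ ω = b} := hφ (measurableSet_singleton b)
  have hdisj : Disjoint {ω | φ ω = a} {ω | φ ω = b} :=
    Set.disjoint_left.mpr fun ω ha hb => hab (ha.symm.trans hb)
  have hunion : μ ({ω | φ ω = a} ∪ {ω | φ ω = b}) = 1 := by
    rw [measure_union hdisj hB, h]
  exact (prob_compl_eq_zero_iff (hφ (measurableSet_singleton a) |>.union hB)).mpr hunion

theorem integral_comp_eq_of_ae_eq_or_eq [IsFiniteMeasure μ] {E : Type*} [NormedAddCommGroup E]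
    [NormedSpace ℝ E] [CompleteSpace E] (hφ : Measurable φ) (hab : a ≠ b)
    (h : ∀ᵐ ω ∂μ, φ ω = a ∨ φ ω = b) (g : X → E) :
    ∫ ω, g (φ ω) ∂μ = μ.real {ω | φ ω = a} • g a + μ.real {ω | φ ω = b} • g b := by
  have hA : MeasurableSet {ω | φ ω = a} := hφ (measurableSet_singleton a)
  have hB : MeasurableSet {ω | φ ω = b} := hφ (measurableSet_singleton b)
  have hsplit : (fun ω => g (φ ω)) =ᵐ[μ]
      fun ω => {ω | φ ω = a}.indicator (fun _ => g a) ω +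
        {ω | φ ω = b}.indicator (fun _ => g b) ω := by
    filter_upwards [h] with ω hω
    rcases hω with ha | hb
    · simp [Set.indicator, ha, hab]
    · simp [Set.indicator, hb, hab.symm]
  rw [integral_congr_ae hsplit, integral_add ((integrable_const _).indicator hA)
    ((integrable_const _).indicator hB), integral_indicator_const _ hA,
    integral_indicator_const _ hB]

theorem integral_comp_of_two_point_law [IsProbabilityMeasure μ] {E : Type*}
    [NormedAddCommGroup E] [NormedSpace ℝ E] [CompleteSpace E] (hφ : Measurable φ) (hab : a ≠ b)
    {p : ℝ} (hp₀ : 0 ≤ p) (hp₁ : p ≤ 1) (ha : μ {ω | φ ω = a} = ENNReal.ofReal p)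
    (hb : μ {ω | φ ω = b} = ENNReal.ofReal (1 - p)) (g : X → E) :
    ∫ ω, g (φ ω) ∂μ = p • g a + (1 - p) • g b := by
  have htotal : μ {ω | φ ω = a} + μ {ω | φ ω = b} = 1 := by
    rw [ha, hb, ← ENNReal.ofReal_add hp₀ (by linarith)]
    simp
  rw [integral_comp_eq_of_ae_eq_or_eq hφ hab
    (ae_eq_or_eq_of_measure_add_eq_one hφ hab htotal) g, measureReal_def, measureReal_def, ha, hb,
    ENNReal.toReal_ofReal hp₀, ENNReal.toReal_ofReal (by linarith)]

end TwoPointLaw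

theorem cosh_add_mul_sinh_eq_one {d : ℝ} (hd : d ≠ 0) :
    cosh d + (-1 + (1 - cosh d + sinh d) / sinh d) * sinh d = 1 := by
  have : sinh d ≠ 0 := sinh_ne_zero.mpr hd
  field_simp
  ring

theorem one_sub_cosh_add_sinh_div_sinh_lt_one {d : ℝ} (hd : 0 < d) :
    (1 - cosh d + sinh d) / sinh d < 1 := by
  rw [div_lt_one (sinh_pos_iff.mpr hd)]
  linarith [one_lt_cosh.mpr hd.ne']

theorem two_point_phi_expectations_general {Ω : Type*} [MeasurableSpace Ω]
    (μ : Measure Ω) [IsProbabilityMeasure μ]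
    (d : ℝ) (hd : 0 < d)
    (φ : Ω → ℝ) (hφmeas : Measurable φ)
    (ε α : ℝ)
    (hε : ε = (1 - cosh d + sinh d) / sinh d)
    (hα : α = (1 - ε) / (2 - ε))
    (h1 : μ {ω | φ ω = 1} = ENNReal.ofReal α)
    (h2 : μ {ω | φ ω = -1 + ε} = ENNReal.ofReal (1 - α)) :
    (∫ ω, φ ω ∂μ) = 0 ∧
    (∫ ω, log (cosh d + φ ω * sinh d) ∂μ) = α * d := by
  have hε1 : ε < 1 := hε ▸ one_sub_cosh_add_sinh_div_sinh_lt_one hd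
  have hα₀ : 0 ≤ α := hα ▸ div_nonneg (by linarith) (by linarith)
  have hα₁ : α ≤ 1 := hα ▸ (div_le_one (by linarith)).mpr (by linarith)
  have hlaw (g : ℝ → ℝ) := integral_comp_of_two_point_law hφmeas
    (show (1 : ℝ) ≠ -1 + ε by linarith) hα₀ hα₁ h1 h2 g
  constructor
  · refine (hlaw fun x => x).trans ?_
    show α * 1 + (1 - α) * (-1 + ε) = 0
    rw [hα]
    field_simp [show (2 - ε) ≠ 0 by linarith]
    ring
  · have hlower : cosh d + (-1 + ε) * sinh d = 1 := hε ▸ cosh_add_mul_sinh_eq_one hd.ne'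
    rw [hlaw fun x => log (cosh d + x * sinh d), one_mul, cosh_add_sinh, log_exp, hlower, log_one]
    simp

theorem two_point_phi_expectations {Ω : Type*} [MeasurableSpace Ω]
    (μ : Measure Ω) [IsProbabilityMeasure μ]
    (k d : ℝ) (hk : 0 < k) (hd : 0 < d)
    (φ : Ω → ℝ) (hφmeas : Measurable φ) (hφrange : ∀ ω, φ ω ∈ Set.Icc (-1 : ℝ) 1)
    (ε α : ℝ)
    (hε : ε = (1 - cosh d + sinh d) / sinh d)
    (hα : α = (1 - ε) / (2 - ε))
    (h1 : μ {ω | φ ω = 1} = ENNReal.ofReal α)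
    (h2 : μ {ω | φ ω = -1 + ε} = ENNReal.ofReal (1 - α)) :
    (∫ ω, φ ω ∂μ) = 0 ∧
    (∫ ω, log (cosh d + φ ω * sinh d) ∂μ) = α * d :=
  two_point_phi_expectations_general μ d hd φ hφmeas ε α hε hα h1 h2
end
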